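/- arXiv:1304.4853 — 3 statements merged into one kernel-verified Lean document; each statement's English description precedes it below -/
import Mathlib

section
/- Let 𝒳 be an ordered vector space and ρ : 𝒳 → ℝ a convex functional that is inversely monotone (X ≤ Y implies ρ(Y) ≤ ρ(X)) and continuous from below (for every nondecreasing sequence Xₙ ↗ X in 𝒳 one has ρ(Xₙ) ↘ ρ(X)). Then ρ is continuous from above: for every nonincreasing sequence Xₙ ↘ X in 𝒳 one has ρ(Xₙ) ↗ ρ(X). -/
/-!
Reflecting a nonincreasing sequence `Xₙ ↘ X` through its infimum gives the nondecreasing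
sequence `2X - Xₙ ↗ X`. Since `X` is the midpoint of `Xₙ` and `2X - Xₙ`, convexity gives
`2ρ(X) - ρ(2X - Xₙ) ≤ ρ(Xₙ) ≤ ρ(X)`, the upper bound by monotonicity, and continuity from below
sends the lower bound to `ρ(X)`.
-/

open Filter Set Topology

theorem IsGLB.isLUB_range_const_sub {E ι : Type*} [AddCommGroup E] [PartialOrder E]
    [IsOrderedAddMonoid E] {f : ι → E} {a : E} (h : IsGLB (range f) a) (c : E) :
    IsLUB (range fun i => c - f i) (c - a) := by
  have := (OrderIso.subLeft c).isGLB_image'.2 h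
  rwa [← range_comp] at this

section Convex

variable {E : Type*} [AddCommGroup E] [Module ℝ E] {ρ : E → ℝ}

theorem ConvexOn.two_mul_sub_le (hρ : ConvexOn ℝ univ ρ) (x y : E) :
    2 * ρ x - ρ (x + x - y) ≤ ρ y := by
  have hmid : (1 / 2 : ℝ) • y + (1 / 2 : ℝ) • (x + x - y) = x := by
    rw [← smul_add, add_sub_cancel, ← two_smul ℝ x, smul_smul]; norm_num
  have := hρ.2 (mem_univ y) (mem_univ (x + x - y))
    (show (0 : ℝ) ≤ 1 / 2 by norm_num) (show (0 : ℝ) ≤ 1 / 2 by norm_num) (by norm_num)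
  rw [hmid, smul_eq_mul, smul_eq_mul] at this
  linarith

variable [PartialOrder E]

theorem ConvexOn.tendsto_of_tendsto_reflect {α : Type*} {l : Filter α} (hρ : ConvexOn ℝ univ ρ)
    (hanti : Antitone ρ) {f : α → E} {x : E} (hx : ∀ a, x ≤ f a)
    (hreflect : Tendsto (fun a => ρ (x + x - f a)) l (𝓝 (ρ x))) :
    Tendsto (fun a => ρ (f a)) l (𝓝 (ρ x)) := by
  have hlower : Tendsto (fun a => 2 * ρ x - ρ (x + x - f a)) l (𝓝 (ρ x)) := by
    simpa [two_mul] using (tendsto_const_nhds (x := 2 * ρ x)).sub hreflect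
  exact tendsto_of_tendsto_of_tendsto_of_le_of_le hlower tendsto_const_nhds
    (fun a => hρ.two_mul_sub_le x (f a)) (fun a => hanti (hx a))

end Convex

/-- A convex, inversely monotone functional on an ordered vector space
which is continuous from below (along nondecreasing sequences with a supremum) is
continuous from above (along nonincreasing sequences with an infimum). -/
theorem stmt1 {𝒳 : Type*} [AddCommGroup 𝒳] [PartialOrder 𝒳] [IsOrderedAddMonoid 𝒳] [Module ℝ 𝒳]
    (ρ : 𝒳 → ℝ)
    -- convexity
    (hconv : ∀ X Y : 𝒳, ∀ l : ℝ, l ∈ Set.Icc (0:ℝ) 1 →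
      ρ (l • X + (1 - l) • Y) ≤ l * ρ X + (1 - l) * ρ Y)
    -- inverse monotonicity
    (hmono : ∀ X Y : 𝒳, X ≤ Y → ρ Y ≤ ρ X)
    -- continuity from below
    (hbelow : ∀ (Xn : ℕ → 𝒳) (X : 𝒳), Monotone Xn → IsLUB (Set.range Xn) X →
      Tendsto (fun n => ρ (Xn n)) atTop (nhds (ρ X))) :
    -- continuity from above
    ∀ (Xn : ℕ → 𝒳) (X : 𝒳), Antitone Xn → IsGLB (Set.range Xn) X →
      Tendsto (fun n => ρ (Xn n)) atTop (nhds (ρ X)) := by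
  intro Xn X hXn hglb
  have hρ : ConvexOn ℝ univ ρ := ⟨convex_univ, fun Y _ Z _ a b ha hb hab => by
    obtain rfl : b = 1 - a := by linarith
    exact hconv Y Z a ⟨ha, by linarith⟩⟩
  have hreflect_lub : IsLUB (range fun n => X + X - Xn n) X := by
    simpa using hglb.isLUB_range_const_sub (X + X)
  refine hρ.tendsto_of_tendsto_reflect hmono (fun n => hglb.1 ⟨n, rfl⟩) ?_
  exact hbelow _ X (fun m n hmn => sub_le_sub_left (hXn hmn) _) hreflect_lub
end

section
/- If a monetary convex risk measure for processes ρ on R∞ is cash additive at all times t ∈ [0,T] and admits a robust representation via penalized optional measures, then ρ reduces to a convex risk measure on bounded F_T-measurable random variables: ρ(X) = sup over probability measures Q ≪ P of (E_Q[−X_T] − γ̃(Q)) for some penalty function γ̃, i.e., ρ(X) depends on X only through its terminal value X_T. -/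
/-! Cash additivity at `t` applied to the constant payoff `c · 1_{[t,T]}` forces
`-c = sup_i (-c E[α_i [t,T]] - γ_i)` for all `c > 0`; letting `c → ∞` gives `E[α_i [t,T]] ≥ 1 =
E[α_i [0,T]]`, so `α_i [0,t) = 0` almost surely. Letting `t ↑ T`, almost every `α_i ω` is a point
mass at `T` of weight `L_i ω = α_i ω [0,T]`, and the penalized expectations become
`E_{Q_i}[-X_T] - γ_i` with `dQ_i/dP = L_i`. -/

open MeasureTheory Set Filter

noncomputable section

/-- The (deterministic) step process `1_{[t,T]}`. -/
def stepProc (t T : ℝ) : ℝ → ℝ := Set.indicator (Set.Icc t T) 1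

/-- Membership in `R∞`: bounded, adapted, càdlàg (on `[0,T]`) processes. -/
def MemRInf {Ω : Type*} {m : MeasurableSpace Ω} (ℱ : MeasureTheory.Filtration ℝ m)
    (T : ℝ) (X : ℝ → Ω → ℝ) : Prop :=
  MeasureTheory.Adapted ℱ X ∧
  (∃ C : ℝ, ∀ s ω, |X s ω| ≤ C) ∧
  (∀ ω, ∀ s ∈ Set.Ico (0:ℝ) T, ContinuousWithinAt (fun u => X u ω) (Set.Icc s T) s) ∧
  (∀ ω, ∀ s ∈ Set.Ioc (0:ℝ) T, ∃ l : ℝ,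
    Tendsto (fun u => X u ω) (nhdsWithin s (Set.Ico 0 s)) (nhds l))

/-- `α : Ω → Measure ℝ` is a normalized optional measure on `[0,T]`. -/
def MemZOne {Ω : Type*} {m : MeasurableSpace Ω} (ℱ : MeasureTheory.Filtration ℝ m)
    (P : Measure Ω) (T : ℝ) (α : Ω → Measure ℝ) : Prop :=
  (∀ ω, IsFiniteMeasure (α ω)) ∧
  (∀ ω, α ω (Set.Icc 0 T)ᶜ = 0) ∧
  (∀ t : ℝ, Measurable[ℱ t] fun ω => ((α ω) (Set.Icc 0 t)).toReal) ∧
  (∫ ω, ((α ω) (Set.Icc 0 T)).toReal ∂P) = 1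

open Topology

lemma le_of_iSup_eq_of_ne_zero {ι : Sort*} {f : ι → ℝ} {a : ℝ} (h : ⨆ j, f j = a) (ha : a ≠ 0)
    (j : ι) : f j ≤ a := by
  have hbdd : BddAbove (range f) := by
    by_contra hb
    exact ha (h ▸ Real.iSup_of_not_bddAbove hb)
  exact h ▸ le_ciSup hbdd j

lemma one_le_of_forall_iSup_eq_neg {ι : Sort*} {m γ : ι → ℝ}
    (h : ∀ c : ℝ, 0 < c → ⨆ j, (-c * m j - γ j) = -c) (i : ι) : 1 ≤ m i := by
  by_contra! hlt
  set c := (|γ i| + 1) / (1 - m i)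
  have hc : c * (1 - m i) = |γ i| + 1 := div_mul_cancel₀ _ (by linarith)
  have hc_pos : 0 < c := div_pos (by positivity) (by linarith)
  have := le_of_iSup_eq_of_ne_zero (h c hc_pos) (neg_ne_zero.2 hc_pos.ne') i
  linarith [le_abs_self (γ i)]

section stepProc

variable {t T : ℝ}

lemma stepProc_of_mem {u : ℝ} (h : u ∈ Icc t T) : stepProc t T u = 1 :=
  indicator_of_mem h _

lemma stepProc_of_lt {u : ℝ} (h : u < t) : stepProc t T u = 0 :=
  indicator_of_notMem (fun hu => h.not_ge hu.1) _

lemma abs_stepProc_le_one (u : ℝ) : |stepProc t T u| ≤ 1 := by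
  by_cases hu : u ∈ Icc t T
  · simp [stepProc_of_mem hu]
  · simp [stepProc, indicator_of_notMem hu]

lemma continuousWithinAt_stepProc {s : ℝ} (hs : s ≤ T) :
    ContinuousWithinAt (stepProc t T) (Icc s T) s := by
  rcases lt_or_ge s t with hst | hts
  · refine (continuousAt_const (y := (0 : ℝ)).congr ?_).continuousWithinAt
    filter_upwards [eventually_lt_nhds hst] with u hu
    exact (stepProc_of_lt hu).symm
  · exact (continuousWithinAt_const (b := (1 : ℝ))).congr_of_mem
      (fun u hu => stepProc_of_mem ⟨hts.trans hu.1, hu.2⟩) ⟨le_rfl, hs⟩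

lemma exists_tendsto_stepProc_nhdsLT {s : ℝ} (hs : s ≤ T) :
    ∃ l, Tendsto (stepProc t T) (𝓝[<] s) (𝓝 l) := by
  rcases le_or_gt s t with hst | hts
  · refine ⟨0, tendsto_const_nhds.congr' ?_⟩
    filter_upwards [self_mem_nhdsWithin] with u hu
    exact (stepProc_of_lt (lt_of_lt_of_le hu hst)).symm
  · refine ⟨1, tendsto_const_nhds.congr' ?_⟩
    filter_upwards [Ioo_mem_nhdsLT hts] with u (hu : u ∈ Ioo t s)
    exact (stepProc_of_mem ⟨hu.1.le, hu.2.le.trans hs⟩).symm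

lemma setIntegral_neg_const_mul_stepProc (μ : Measure ℝ) (ht : 0 ≤ t) (c : ℝ) :
    ∫ s in Icc 0 T, -(c * stepProc t T s) ∂μ = -c * μ.real (Icc t T) := by
  have hsub : Icc t T ⊆ Icc 0 T := Icc_subset_Icc_left ht
  rw [integral_neg, integral_const_mul, stepProc, integral_indicator_one measurableSet_Icc,
    measureReal_restrict_apply measurableSet_Icc, inter_eq_left.2 hsub, neg_mul]

end stepProc

section RInf

variable {Ω : Type*} {mΩ : MeasurableSpace Ω} (ℱ : Filtration ℝ mΩ) (T : ℝ)

lemma memRInf_of_deterministic {f : ℝ → ℝ} (hbdd : ∃ C, ∀ s, |f s| ≤ C)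
    (hright : ∀ s ∈ Ico 0 T, ContinuousWithinAt f (Icc s T) s)
    (hleft : ∀ s ∈ Ioc 0 T, ∃ l, Tendsto f (𝓝[<] s) (𝓝 l)) :
    MemRInf ℱ T (fun u (_ : Ω) => f u) := by
  obtain ⟨C, hC⟩ := hbdd
  refine ⟨fun _ => measurable_const, ⟨C, fun s _ => hC s⟩, fun _ => hright, fun _ s hs => ?_⟩
  obtain ⟨l, hl⟩ := hleft s hs
  exact ⟨l, hl.mono_left (nhdsWithin_mono _ Ico_subset_Iio_self)⟩

lemma memRInf_zero : MemRInf ℱ T (fun _ (_ : Ω) => 0) :=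
  memRInf_of_deterministic ℱ T ⟨0, by simp⟩ (fun _ _ => continuousWithinAt_const)
    (fun _ _ => ⟨0, tendsto_const_nhds⟩)

lemma memRInf_const_mul_stepProc (t c : ℝ) :
    MemRInf ℱ T (fun u (_ : Ω) => c * stepProc t T u) := by
  refine memRInf_of_deterministic ℱ T ⟨|c|, fun s => ?_⟩
    (fun s hs => continuousWithinAt_const.mul (continuousWithinAt_stepProc hs.2.le))
    (fun s hs => ?_)
  · rw [abs_mul]
    exact mul_le_of_le_one_right (abs_nonneg c) (abs_stepProc_le_one s)
  · obtain ⟨l, hl⟩ := exists_tendsto_stepProc_nhdsLT (t := t) hs.2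
    exact ⟨c * l, hl.const_mul c⟩

end RInf

section Measures

variable {Ω E : Type*} {mΩ : MeasurableSpace Ω} {mE : MeasurableSpace E} {P : Measure Ω}

lemma ae_measure_sdiff_eq_zero_of_integral_le {μ : Ω → Measure E} [∀ ω, IsFiniteMeasure (μ ω)]
    {A B : Set E} (hAB : A ⊆ B) (hA : MeasurableSet A)
    (hA_int : Integrable (fun ω => (μ ω).real A) P) (hB_int : Integrable (fun ω => (μ ω).real B) P)
    (hle : ∫ ω, (μ ω).real B ∂P ≤ ∫ ω, (μ ω).real A ∂P) :
    ∀ᵐ ω ∂P, μ ω (B \ A) = 0 := by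
  have hsdiff : (fun ω => (μ ω).real (B \ A)) = fun ω => (μ ω).real B - (μ ω).real A :=
    funext fun ω => measureReal_sdiff hAB hA
  have hint : Integrable (fun ω => (μ ω).real (B \ A)) P := hsdiff ▸ hB_int.sub hA_int
  have hzero : ∫ ω, (μ ω).real (B \ A) ∂P = 0 := by
    refine le_antisymm ?_ (integral_nonneg fun _ => measureReal_nonneg)
    rw [hsdiff, integral_sub hB_int hA_int]
    linarith
  filter_upwards [(integral_eq_zero_iff_of_nonneg (fun _ => measureReal_nonneg) hint).1 hzero]
    with ω hω
  exact (measureReal_eq_zero_iff).1 hω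

lemma ae_measure_Ico_eq_zero_of_forall_lt {μ : Ω → Measure ℝ} {a b : ℝ} (hab : a < b)
    (h : ∀ t ∈ Ioo a b, ∀ᵐ ω ∂P, μ ω (Ico a t) = 0) : ∀ᵐ ω ∂P, μ ω (Ico a b) = 0 := by
  obtain ⟨u, -, hu_mem, hu_lim⟩ := exists_seq_strictMono_tendsto' hab
  have hunion : Ico a b = ⋃ n, Ico a (u n) := by
    refine Subset.antisymm (fun x hx => ?_) (iUnion_subset fun n => ?_)
    · obtain ⟨n, hn⟩ := (hu_lim.eventually (lt_mem_nhds hx.2)).exists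
      exact mem_iUnion.2 ⟨n, hx.1, hn⟩
    · exact Ico_subset_Ico_right (hu_mem n).2.le
  filter_upwards [ae_all_iff.2 fun n => h (u n) (hu_mem n)] with ω hω
  rw [hunion]
  exact measure_iUnion_null hω

lemma setIntegral_eq_measureReal_mul_of_measure_compl_singleton {μ : Measure E} {a : E}
    (h : μ {a}ᶜ = 0) (s : Set E) (f : E → ℝ) : ∫ x in s, f x ∂μ = μ.real s * f a := by
  have hae : ∀ᵐ x ∂μ.restrict s, f x = f a := ae_restrict_of_ae (measure_mono_null
    (fun x hx => (hx : f x ≠ f a) ∘ congrArg f) h)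
  rw [integral_congr_ae hae, setIntegral_const, smul_eq_mul]

lemma isProbabilityMeasure_withDensity_ofReal {f : Ω → ℝ} (hf : Integrable f P) (hf0 : 0 ≤ f)
    (h1 : ∫ ω, f ω ∂P = 1) : IsProbabilityMeasure (P.withDensity fun ω => ENNReal.ofReal (f ω)) :=
  ⟨by rw [withDensity_apply _ MeasurableSet.univ, Measure.restrict_univ,
    ← ofReal_integral_eq_lintegral_ofReal hf (Eventually.of_forall hf0), h1, ENNReal.ofReal_one]⟩

lemma integral_withDensity_ofReal {f : Ω → ℝ} (hf : Measurable f) (hf0 : 0 ≤ f) (g : Ω → ℝ) :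
    ∫ ω, g ω ∂(P.withDensity fun ω => ENNReal.ofReal (f ω)) = ∫ ω, f ω * g ω ∂P := by
  rw [integral_withDensity_eq_integral_toReal_smul hf.ennreal_ofReal
    (Eventually.of_forall fun _ => ENNReal.ofReal_lt_top)]
  simp only [ENNReal.toReal_ofReal (hf0 _), smul_eq_mul]

end Measures

section Representation

variable {Ω : Type*} {mΩ : MeasurableSpace Ω} {ℱ : Filtration ℝ mΩ} {P : Measure Ω} {T : ℝ}
  {α : Ω → Measure ℝ}

lemma MemZOne.measurable_mass (hα : MemZOne ℱ P T α) :
    Measurable fun ω => (α ω (Icc 0 T)).toReal :=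
  (hα.2.2.1 T).mono (ℱ.le T) le_rfl

lemma MemZOne.integrable_mass (hα : MemZOne ℱ P T α) :
    Integrable (fun ω => (α ω (Icc 0 T)).toReal) P :=
  .of_integral_ne_zero (hα.2.2.2 ▸ one_ne_zero)

lemma one_le_integral_measure_Icc {ι : Type*} {ρ : (ℝ → Ω → ℝ) → ℝ} {α : ι → Ω → Measure ℝ}
    {γ : ι → ℝ} (hnorm : ρ (fun _ _ => 0) = 0) {t : ℝ} (ht : 0 ≤ t)
    (hca : ∀ X, MemRInf ℱ T X → ∀ c : ℝ,
      ρ (fun u ω => X u ω + c * stepProc t T u) = ρ X - c)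
    (hrep : ∀ X, MemRInf ℱ T X →
      ρ X = ⨆ i : ι, ((∫ ω, (∫ t in Icc 0 T, (-(X t ω)) ∂(α i ω)) ∂P) - γ i))
    (i : ι) : 1 ≤ ∫ ω, (α i ω (Icc t T)).toReal ∂P := by
  refine one_le_of_forall_iSup_eq_neg (m := fun j => ∫ ω, (α j ω (Icc t T)).toReal ∂P)
    (γ := γ) (fun c _ => ?_) i
  have hρ : ρ (fun u _ => c * stepProc t T u) = -c := by
    simpa [hnorm] using hca _ (memRInf_zero ℱ T) c
  rw [hrep _ (memRInf_const_mul_stepProc ℱ T t c)] at hρ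
  simpa only [setIntegral_neg_const_mul_stepProc _ ht, integral_const_mul, measureReal_def]
    using hρ

lemma MemZOne.ae_measure_Ico_eq_zero (hα : MemZOne ℱ P T α) {t : ℝ} (ht : t ∈ Icc 0 T)
    (hmass : 1 ≤ ∫ ω, (α ω (Icc t T)).toReal ∂P) : ∀ᵐ ω ∂P, α ω (Ico 0 t) = 0 := by
  have := hα.1
  have hsub : Ico 0 t ⊆ Icc 0 T \ Icc t T :=
    fun x hx => ⟨⟨hx.1, hx.2.le.trans ht.2⟩, fun hx' => hx.2.not_ge hx'.1⟩
  filter_upwards [ae_measure_sdiff_eq_zero_of_integral_le (Icc_subset_Icc_left ht.1)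
    measurableSet_Icc (.of_integral_ne_zero (one_pos.trans_le hmass).ne') hα.integrable_mass
    (hα.2.2.2.trans_le hmass)] with ω hω
  exact measure_mono_null hsub hω

lemma MemZOne.ae_measure_compl_singleton_eq_zero (hα : MemZOne ℱ P T α) (hT : 0 < T)
    (hmass : ∀ t ∈ Icc 0 T, 1 ≤ ∫ ω, (α ω (Icc t T)).toReal ∂P) :
    ∀ᵐ ω ∂P, α ω {T}ᶜ = 0 := by
  have hIco : ∀ᵐ ω ∂P, α ω (Ico 0 T) = 0 :=
    ae_measure_Ico_eq_zero_of_forall_lt hT fun t ht =>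
      hα.ae_measure_Ico_eq_zero (Ioo_subset_Icc_self ht) (hmass t (Ioo_subset_Icc_self ht))
  filter_upwards [hIco] with ω hω
  refine measure_mono_null (fun x hx => ?_) (measure_union_null hω (hα.2.1 ω))
  by_cases hx' : x ∈ Icc 0 T
  · exact Or.inl ⟨hx'.1, lt_of_le_of_ne hx'.2 hx⟩
  · exact Or.inr hx'

lemma MemZOne.integral_setIntegral_eq (hα : MemZOne ℱ P T α)
    (hsupp : ∀ᵐ ω ∂P, α ω {T}ᶜ = 0) (X : ℝ → Ω → ℝ) :
    ∫ ω, (∫ s in Icc 0 T, -(X s ω) ∂(α ω)) ∂P =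
      ∫ ω, -(X T ω) ∂(P.withDensity fun ω => ENNReal.ofReal (α ω (Icc 0 T)).toReal) := by
  rw [integral_withDensity_ofReal hα.measurable_mass (fun _ => ENNReal.toReal_nonneg)]
  refine integral_congr_ae ?_
  filter_upwards [hsupp] with ω hω
  exact setIntegral_eq_measureReal_mul_of_measure_compl_singleton hω _ _

end Representation

theorem stmt12_general {Ω : Type*} {mΩ : MeasurableSpace Ω} (ℱ : MeasureTheory.Filtration ℝ mΩ)
    (P : Measure Ω)
    (T : ℝ) (hT : 0 < T)
    (ρ : (ℝ → Ω → ℝ) → ℝ)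
    -- monetary convex risk measure axioms
    (hnorm : ρ (fun _ _ => 0) = 0)
    -- full cash additivity
    (hca : ∀ t ∈ Set.Icc (0:ℝ) T, ∀ X, MemRInf ℱ T X → ∀ c : ℝ,
      ρ (fun u ω => X u ω + c * stepProc t T u) = ρ X - c)
    -- robust representation via penalized optional measures
    {ι : Type} [Nonempty ι]
    (α : ι → Ω → Measure ℝ) (hα : ∀ i, MemZOne ℱ P T (α i))
    (γ : ι → ℝ) (hγpos : ∀ i, 0 ≤ γ i)
    (hrep : ∀ X, MemRInf ℱ T X →
      ρ X = ⨆ i : ι, ((∫ ω, (∫ t in Set.Icc 0 T, (-(X t ω)) ∂(α i ω)) ∂P) - γ i)) :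
    ∃ (κ : Type) (_ : Nonempty κ) (Q : κ → Measure Ω) (γ' : κ → ℝ),
      (∀ j, IsProbabilityMeasure (Q j)) ∧
      (∀ j, Q j ≪ P) ∧
      (∀ j, 0 ≤ γ' j) ∧
      (∀ X, MemRInf ℱ T X → ρ X = ⨆ j : κ, ((∫ ω, -(X T ω) ∂(Q j)) - γ' j)) ∧
      (∀ X Y, MemRInf ℱ T X → MemRInf ℱ T Y → (∀ ω, X T ω = Y T ω) → ρ X = ρ Y) := by
  have hsupp : ∀ i, ∀ᵐ ω ∂P, α i ω {T}ᶜ = 0 := fun i =>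
    (hα i).ae_measure_compl_singleton_eq_zero hT fun t ht =>
      one_le_integral_measure_Icc hnorm ht.1 (hca t ht) hrep i
  set Q : ι → Measure Ω := fun i =>
    P.withDensity fun ω => ENNReal.ofReal (α i ω (Icc 0 T)).toReal
  have hrepQ : ∀ X, MemRInf ℱ T X → ρ X = ⨆ i, ((∫ ω, -(X T ω) ∂(Q i)) - γ i) := fun X hX => by
    simp only [hrep X hX, (hα _).integral_setIntegral_eq (hsupp _), Q]
  refine ⟨ι, inferInstance, Q, γ, fun i => ?_, fun i => withDensity_absolutelyContinuous _ _,
    hγpos, hrepQ, fun X Y hX hY hXY => ?_⟩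
  · exact isProbabilityMeasure_withDensity_ofReal (hα i).integrable_mass
      (fun _ => ENNReal.toReal_nonneg) (hα i).2.2.2
  · simp only [hrepQ X hX, hrepQ Y hY, hXY]

/-- If a monetary convex risk measure for processes `ρ` on `R∞` is cash
additive at all times `t ∈ [0,T]` and admits a robust representation via penalized optional
measures, then `ρ` reduces to a convex risk measure on bounded `F_T`-measurable random
variables: `ρ(X) = sup_Q (E_Q[−X_T] − γ̃(Q))` over probability measures `Q ≪ P`, and in
particular `ρ(X)` depends on `X` only through its terminal value `X_T`. -/
theorem stmt12 {Ω : Type*} {mΩ : MeasurableSpace Ω} (ℱ : MeasureTheory.Filtration ℝ mΩ)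
    (P : Measure Ω) [IsProbabilityMeasure P]
    (T : ℝ) (hT : 0 < T)
    (ρ : (ℝ → Ω → ℝ) → ℝ)
    -- monetary convex risk measure axioms
    (hcash : ∀ X, MemRInf ℱ T X → ∀ c : ℝ,
      ρ (fun u ω => X u ω + c * stepProc 0 T u) = ρ X - c)
    (hmono : ∀ X Y, MemRInf ℱ T X → MemRInf ℱ T Y →
      (∀ u ∈ Set.Icc (0:ℝ) T, ∀ ω, X u ω ≤ Y u ω) → ρ Y ≤ ρ X)
    (hconv : ∀ X Y, MemRInf ℱ T X → MemRInf ℱ T Y → ∀ l ∈ Set.Icc (0:ℝ) 1,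
      ρ (fun u ω => l * X u ω + (1 - l) * Y u ω) ≤ l * ρ X + (1 - l) * ρ Y)
    (hnorm : ρ (fun _ _ => 0) = 0)
    -- full cash additivity
    (hca : ∀ t ∈ Set.Icc (0:ℝ) T, ∀ X, MemRInf ℱ T X → ∀ c : ℝ,
      ρ (fun u ω => X u ω + c * stepProc t T u) = ρ X - c)
    -- robust representation via penalized optional measures
    {ι : Type} [Nonempty ι]
    (α : ι → Ω → Measure ℝ) (hα : ∀ i, MemZOne ℱ P T (α i))
    (γ : ι → ℝ) (hγpos : ∀ i, 0 ≤ γ i)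
    (hγinf : ∀ ε : ℝ, 0 < ε → ∃ i, γ i < ε)
    (hrep : ∀ X, MemRInf ℱ T X →
      ρ X = ⨆ i : ι, ((∫ ω, (∫ t in Set.Icc 0 T, (-(X t ω)) ∂(α i ω)) ∂P) - γ i)) :
    ∃ (κ : Type) (_ : Nonempty κ) (Q : κ → Measure Ω) (γ' : κ → ℝ),
      (∀ j, IsProbabilityMeasure (Q j)) ∧
      (∀ j, Q j ≪ P) ∧
      (∀ j, 0 ≤ γ' j) ∧
      (∀ X, MemRInf ℱ T X → ρ X = ⨆ j : κ, ((∫ ω, -(X T ω) ∂(Q j)) - γ' j)) ∧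
      (∀ X Y, MemRInf ℱ T X → MemRInf ℱ T Y → (∀ ω, X T ω = Y T ω) → ρ X = ρ Y) :=
  stmt12_general ℱ P T hT ρ hnorm hca α hα γ hγpos hrep
end
end

section
/- Let g : ℝ × ℝᵈ → ℝ be convex with |g(y,z)| ≤ C(1 + |y| + |z|²), and let g*(β,μ) = sup_{(y,z)} {−βy − μ·z − g(y,z)}. Then for every (y₀, z₀) there exists (β̄, μ̄) with g*(β̄, μ̄) < ∞ attaining the Fenchel equality g(y₀, z₀) = −β̄ y₀ − μ̄·z₀ − g*(β̄, μ̄), and moreover |μ̄|² ≤ B(1 + |y₀| + |z₀|²) for a constant B depending only on C. -/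
/-!
A convex `f` that is finite on a whole real vector space has at each point `x` a one-sided
directional derivative `f'(x; ·)`, the infimum of the difference quotients; it is positively
homogeneous and subadditive, so Hahn–Banach gives a linear `L ≤ f'(x; ·)`, that is a subgradient,
and the Fenchel–Young equality holds at it. For the bound, test the subgradient inequality at
`(y₀, z₀ + w)` with `‖w‖ = s := √(1 + |y₀| + ‖z₀‖²)`: quadratic growth gives `L (0, w) ≤ 6 C s²`,
so the `z`-component of `L` has norm at most `6 C s`.
-/

open Set

section Subgradient

variable {E : Type*} [AddCommGroup E] [Module ℝ E] {f : E → ℝ}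

noncomputable def dirSlope (f : E → ℝ) (x v : E) (t : ℝ) : ℝ := (f (x + t • v) - f x) / t

/-- For convex `f` the quotients decrease as `t ↓ 0`, so this is the one-sided directional
derivative `f'(x; v)`. -/
noncomputable def rightDirDeriv (f : E → ℝ) (x v : E) : ℝ := ⨅ t : Ioi (0 : ℝ), dirSlope f x v t

theorem ConvexOn.comp_line (hf : ConvexOn ℝ univ f) (x v : E) :
    ConvexOn ℝ univ fun t : ℝ => f (x + t • v) := by
  have hline : (fun t : ℝ => f (x + t • v)) = f ∘ AffineMap.lineMap x (x + v) := by
    funext t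
    simp [AffineMap.lineMap_apply, add_comm]
  simpa [hline] using hf.comp_affineMap (AffineMap.lineMap x (x + v))

theorem ConvexOn.dirSlope_mono (hf : ConvexOn ℝ univ f) (x v : E) {s t : ℝ}
    (hs : s ≠ 0) (ht : t ≠ 0) (hst : s ≤ t) : dirSlope f x v s ≤ dirSlope f x v t := by
  simpa [dirSlope] using
    (hf.comp_line x v).secant_mono (mem_univ 0) (mem_univ s) (mem_univ t) hs ht hst

theorem ConvexOn.bddBelow_dirSlope (hf : ConvexOn ℝ univ f) (x v : E) :
    BddBelow (range fun t : Ioi (0 : ℝ) => dirSlope f x v t) := by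
  refine ⟨dirSlope f x v (-1), ?_⟩
  rintro _ ⟨⟨t, ht⟩, rfl⟩
  exact hf.dirSlope_mono x v (by norm_num) (ne_of_gt ht) (by linarith [mem_Ioi.mp ht])

theorem ConvexOn.rightDirDeriv_le_dirSlope (hf : ConvexOn ℝ univ f) (x v : E) {t : ℝ}
    (ht : 0 < t) : rightDirDeriv f x v ≤ dirSlope f x v t :=
  ciInf_le (hf.bddBelow_dirSlope x v) ⟨t, ht⟩

theorem ConvexOn.rightDirDeriv_smul_le (hf : ConvexOn ℝ univ f) (x v : E) {c : ℝ}
    (hc : 0 < c) : rightDirDeriv f x (c • v) ≤ c * rightDirDeriv f x v := by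
  unfold rightDirDeriv
  rw [Real.mul_iInf_of_nonneg hc.le]
  refine le_ciInf fun ⟨t, ht⟩ => ?_
  have hslope : dirSlope f x (c • v) (t / c) = c * dirSlope f x v t := by
    simp only [dirSlope, smul_smul, div_mul_cancel₀ _ hc.ne']
    field_simp
  rw [← hslope]
  exact hf.rightDirDeriv_le_dirSlope x (c • v) (div_pos ht hc)

theorem ConvexOn.rightDirDeriv_smul (hf : ConvexOn ℝ univ f) (x v : E) {c : ℝ}
    (hc : 0 < c) : rightDirDeriv f x (c • v) = c * rightDirDeriv f x v := by
  refine le_antisymm (hf.rightDirDeriv_smul_le x v hc) ?_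
  have h := hf.rightDirDeriv_smul_le x (c • v) (inv_pos.mpr hc)
  rw [inv_smul_smul₀ hc.ne'] at h
  calc c * rightDirDeriv f x v ≤ c * (c⁻¹ * rightDirDeriv f x (c • v)) := by gcongr
    _ = rightDirDeriv f x (c • v) := by field_simp

theorem ConvexOn.dirSlope_add_le (hf : ConvexOn ℝ univ f) (x v w : E) {t : ℝ} (ht : 0 < t) :
    dirSlope f x (v + w) (t / 2) ≤ dirSlope f x v t + dirSlope f x w t := by
  have hmid : x + (t / 2) • (v + w) = (1 / 2 : ℝ) • (x + t • v) + (1 / 2 : ℝ) • (x + t • w) := by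
    module
  have hconv := hf.2 (mem_univ (x + t • v)) (mem_univ (x + t • w))
    (by norm_num : (0 : ℝ) ≤ 1 / 2) (by norm_num : (0 : ℝ) ≤ 1 / 2) (by norm_num)
  rw [← hmid, smul_eq_mul, smul_eq_mul] at hconv
  simp only [dirSlope]
  rw [← add_div, div_le_div_iff₀ (by positivity) ht]
  nlinarith

theorem ConvexOn.rightDirDeriv_add_le (hf : ConvexOn ℝ univ f) (x v w : E) :
    rightDirDeriv f x (v + w) ≤ rightDirDeriv f x v + rightDirDeriv f x w := by
  have key : ∀ s t : Ioi (0 : ℝ),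
      rightDirDeriv f x (v + w) - dirSlope f x w t ≤ dirSlope f x v s := by
    rintro ⟨s, hs⟩ ⟨t, ht⟩
    have hr : 0 < min s t := lt_min hs ht
    have := hf.rightDirDeriv_le_dirSlope x (v + w) (half_pos hr)
    have := hf.dirSlope_add_le x v w hr
    have := hf.dirSlope_mono x v hr.ne' (ne_of_gt hs) (min_le_left s t)
    have := hf.dirSlope_mono x w hr.ne' (ne_of_gt ht) (min_le_right s t)
    dsimp only at *
    linarith
  have key' : ∀ t : Ioi (0 : ℝ),
      rightDirDeriv f x (v + w) - rightDirDeriv f x v ≤ dirSlope f x w t := fun t => by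
    have := le_ciInf fun s => key s t
    rw [← rightDirDeriv] at this
    linarith
  have := le_ciInf key'
  rw [← rightDirDeriv] at this
  linarith

theorem ConvexOn.exists_linearMap_le_sub (hf : ConvexOn ℝ univ f) (x : E) :
    ∃ L : E →ₗ[ℝ] ℝ, ∀ v, L v ≤ f (x + v) - f x := by
  have hzero : rightDirDeriv f x 0 = 0 := by
    have h := hf.rightDirDeriv_smul x 0 two_pos
    rw [smul_zero] at h
    linarith
  obtain ⟨L, -, hL⟩ := exists_extension_of_le_sublinear ((0 : E →ₗ[ℝ] ℝ).toPMap ⊥)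
    (rightDirDeriv f x) (fun c hc v => hf.rightDirDeriv_smul x v hc) (hf.rightDirDeriv_add_le x)
    (by
      rintro ⟨v, hv⟩
      obtain rfl : v = 0 := (Submodule.mem_bot ℝ).mp hv
      simp [hzero])
  refine ⟨L, fun v => (hL v).trans ?_⟩
  simpa [dirSlope] using hf.rightDirDeriv_le_dirSlope x v one_pos

theorem isGreatest_range_sub_of_le_sub {L : E →ₗ[ℝ] ℝ} {x : E}
    (hL : ∀ v, L v ≤ f (x + v) - f x) :
    IsGreatest (range fun p => L p - f p) (L x - f x) := by
  refine ⟨⟨x, rfl⟩, ?_⟩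
  rintro _ ⟨p, rfl⟩
  have h := hL (p - x)
  rw [map_sub, add_sub_cancel] at h
  dsimp only
  linarith

end Subgradient

theorem LinearMap.exists_eq_neg_mul_sub_sum {ι : Type*} [Fintype ι] [DecidableEq ι]
    (L : ℝ × (ι → ℝ) →ₗ[ℝ] ℝ) :
    ∃ (β : ℝ) (μ : ι → ℝ), ∀ p, L p = -β * p.1 - ∑ i, μ i * p.2 i := by
  refine ⟨-L (1, 0), fun i => -L (0, fun j => if i = j then 1 else 0), fun p => ?_⟩
  have hsplit : p = p.1 • ((1 : ℝ), (0 : ι → ℝ)) + LinearMap.inr ℝ ℝ (ι → ℝ) p.2 := by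
    ext <;> simp
  conv_lhs => rw [hsplit, map_add, map_smul, ← LinearMap.comp_apply,
    LinearMap.pi_apply_eq_sum_univ]
  simp [mul_comm]

theorem le_mul_norm_of_le_sub_of_sq_growth {F : Type*} [NormedAddCommGroup F]
    [NormedSpace ℝ F] {h : F → ℝ} {ℓ : F →ₗ[ℝ] ℝ} {C a : ℝ} (hC : 0 ≤ C) (ha : 0 < a)
    (hgrowth : ∀ u, |h u| ≤ C * (a + ‖u‖ ^ 2)) {z : F} (hℓ : ∀ w, ℓ w ≤ h (z + w) - h z)
    (w : F) : ℓ w ≤ 6 * C * √(a + ‖z‖ ^ 2) * ‖w‖ := by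
  set s := √(a + ‖z‖ ^ 2)
  have hs2 : s ^ 2 = a + ‖z‖ ^ 2 := Real.sq_sqrt (by positivity)
  have hs : 0 < s := Real.sqrt_pos.mpr (by positivity)
  have hzs : ‖z‖ ≤ s := Real.le_sqrt_of_sq_le (by linarith)
  have hball : ∀ u : F, ‖u‖ ≤ s → ℓ u ≤ 6 * C * s ^ 2 := by
    intro u hu
    have hzu : ‖z + u‖ ^ 2 ≤ (2 * s) ^ 2 := by
      gcongr
      exact (norm_add_le z u).trans (by linarith)
    have h1 := (le_abs_self _).trans (hgrowth (z + u))
    have h2 := (neg_le_abs _).trans (hgrowth z)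
    have : C * (a + ‖z + u‖ ^ 2) ≤ C * (5 * s ^ 2) := by gcongr; nlinarith
    nlinarith [hℓ u]
  rcases eq_or_ne w 0 with rfl | hw
  · simp
  have hw' : 0 < ‖w‖ := norm_pos_iff.mpr hw
  have hscaled := hball ((s / ‖w‖) • w) (by rw [norm_smul, Real.norm_of_nonneg (by positivity),
    div_mul_cancel₀ _ hw'.ne'])
  rw [map_smul, smul_eq_mul, div_mul_eq_mul_div, div_le_iff₀ hw'] at hscaled
  nlinarith

theorem sum_sq_le_sq_of_sum_sq_le_mul_norm {ι : Type*} [Fintype ι] {μ : ι → ℝ} {K : ℝ}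
    (h : ∑ i, μ i ^ 2 ≤ K * ‖μ‖) : ∑ i, μ i ^ 2 ≤ K ^ 2 := by
  have hsum : 0 ≤ ∑ i, μ i ^ 2 := Finset.sum_nonneg fun i _ => sq_nonneg (μ i)
  -- `‖μ‖` is the sup norm, dominated by the Euclidean one
  have hnorm : ‖μ‖ ^ 2 ≤ ∑ i, μ i ^ 2 := by
    refine (Real.le_sqrt (norm_nonneg μ) hsum).mp <|
      (pi_norm_le_iff_of_nonneg (Real.sqrt_nonneg _)).mpr fun i => ?_
    exact Real.abs_le_sqrt <|
      Finset.single_le_sum (fun j _ => sq_nonneg (μ j)) (Finset.mem_univ i)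
  nlinarith [norm_nonneg μ]

/-- Let `g : ℝ × ℝᵈ → ℝ` be convex with `|g(y,z)| ≤ C(1 + |y| + |z|²)`,
and let `g*(β,μ) = sup_{(y,z)} (−βy − μ·z − g(y,z))`.  There is a constant `B` (depending
only on `C`) such that for every `(y₀,z₀)` there exists `(β̄,μ̄)` with `g*(β̄,μ̄) < ∞`
attaining the Fenchel equality `g(y₀,z₀) = −β̄y₀ − μ̄·z₀ − g*(β̄,μ̄)`, and moreover
`|μ̄|² ≤ B(1 + |y₀| + |z₀|²)`. -/
theorem stmt19 {d : ℕ} (g : ℝ → (Fin d → ℝ) → ℝ) (C : ℝ) (hC : 0 ≤ C)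
    (hgrowth : ∀ y z, |g y z| ≤ C * (1 + |y| + ‖z‖ ^ 2))
    (hconv : ConvexOn ℝ Set.univ fun p : ℝ × (Fin d → ℝ) => g p.1 p.2) :
    ∃ B : ℝ, ∀ (y₀ : ℝ) (z₀ : Fin d → ℝ),
      ∃ (β : ℝ) (μ : Fin d → ℝ),
        BddAbove (Set.range fun p : ℝ × (Fin d → ℝ) =>
          -β * p.1 - (∑ i, μ i * p.2 i) - g p.1 p.2) ∧
        g y₀ z₀ = -β * y₀ - (∑ i, μ i * z₀ i) -
          sSup (Set.range fun p : ℝ × (Fin d → ℝ) =>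
            -β * p.1 - (∑ i, μ i * p.2 i) - g p.1 p.2) ∧
        (∑ i, μ i ^ 2) ≤ B * (1 + |y₀| + ‖z₀‖ ^ 2) := by
  refine ⟨36 * C ^ 2, fun y₀ z₀ => ?_⟩
  obtain ⟨L, hL⟩ := hconv.exists_linearMap_le_sub (y₀, z₀)
  obtain ⟨β, μ, hLβμ⟩ := L.exists_eq_neg_mul_sub_sum
  have hmax := isGreatest_range_sub_of_le_sub (f := fun p : ℝ × (Fin d → ℝ) => g p.1 p.2) hL
  simp only [hLβμ] at hmax
  refine ⟨β, μ, hmax.bddAbove, by rw [hmax.csSup_eq]; ring, ?_⟩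
  have hsub (w : Fin d → ℝ) : (L ∘ₗ LinearMap.inr ℝ ℝ _) w ≤ g y₀ (z₀ + w) - g y₀ z₀ := by
    simpa using hL (0, w)
  have hbound := le_mul_norm_of_le_sub_of_sq_growth hC (by positivity) (hgrowth y₀) hsub (-μ)
  have hμ : (L ∘ₗ LinearMap.inr ℝ ℝ _) (-μ) = ∑ i, μ i ^ 2 := by simp [hLβμ, sq]
  rw [hμ, norm_neg] at hbound
  calc ∑ i, μ i ^ 2 ≤ (6 * C * √(1 + |y₀| + ‖z₀‖ ^ 2)) ^ 2 :=
        sum_sq_le_sq_of_sum_sq_le_mul_norm hbound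
    _ = 36 * C ^ 2 * (1 + |y₀| + ‖z₀‖ ^ 2) := by
        rw [mul_pow, Real.sq_sqrt (by positivity)]; ring
end
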